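/- For the fourth-order condition solution: given the conditions C1–C3 of the paper restricted to a three-stage method, if b_2, b_3 are given by the solutions to C1 and C2 (as linear combinations of φ_3, φ_4 with the coefficients in eq. (3.10) of the paper), then condition C3, namely b_2(z)α₂₁³P₂₁³ + b_3(z)α₃₁³P₃₁³ = 6φ_4(z) for all z, holds if and only if α₂₁ = 2g₂₁P₂₂/P₂₁² and α₃₁ = 2g₃₁P₃₂/P₃₁². -/

import Mathlib

noncomputable def phi (k : ℕ) (z : ℂ) : ℂ := ∑' j : ℕ, z ^ j / (Nat.factorial (j + k) : ℂ)

/-!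
Writing `x = α₂₁ P₂₁²`, `y = α₃₁ P₃₁²` and `D = g₃₁P₂₁P₃₂ − g₂₁P₂₂P₃₁`, the left-hand side of C3
is `(2/D)(x g₃₁P₃₂ − y g₂₁P₂₂) φ₃ + (3/D)(y P₂₁ − x P₃₁) φ₄`. Since `φ₃ = 1/6 + z φ₄`, the
functions `φ₃` and `φ₄` are linearly independent, so C3 amounts to a 2 × 2 linear system in
`(x, y)`. Its determinant is again `D`, and its unique solution is `x = 2g₂₁P₂₂`, `y = 2g₃₁P₃₂`.
-/

theorem summable_phi (k : ℕ) (z : ℂ) :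
    Summable fun j : ℕ => z ^ j / (Nat.factorial (j + k) : ℂ) := by
  refine .of_norm <| .of_nonneg_of_le (fun _ => norm_nonneg _) (fun j => ?_)
    (Real.summable_pow_div_factorial ‖z‖)
  rw [norm_div, norm_pow, Complex.norm_natCast]
  gcongr
  omega

theorem phi_zero (k : ℕ) : phi k 0 = 1 / (Nat.factorial k : ℂ) := by
  rw [phi, tsum_eq_single 0 fun j hj => by simp [zero_pow hj]]
  simp

theorem phi_eq_inv_factorial_add_mul_phi_succ (k : ℕ) (z : ℂ) :
    phi k z = 1 / (Nat.factorial k : ℂ) + z * phi (k + 1) z := by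
  rw [phi, (summable_phi k z).tsum_eq_zero_add, phi, ← tsum_mul_left]
  congr 1
  · simp
  · congr 1 with j
    rw [pow_succ, show j + 1 + k = j + (k + 1) by ring]
    ring

theorem phi_linear_combination_eq_zero_iff (k : ℕ) (A B : ℂ) :
    (∀ z, A * phi k z + B * phi (k + 1) z = 0) ↔ A = 0 ∧ B = 0 := by
  refine ⟨fun h => ?_, fun ⟨hA, hB⟩ z => by simp [hA, hB]⟩
  have hA : A = 0 := by
    by_contra hA
    -- at `z = -B / A` the `phi (k + 1)` term of the recurrence cancels
    have h' := h (-B / A)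
    rw [phi_eq_inv_factorial_add_mul_phi_succ] at h'
    have hcancel : A * (-B / A) = -B := by field_simp
    have : A * (1 / (Nat.factorial k : ℂ)) = 0 := by
      linear_combination h' - phi (k + 1) (-B / A) * hcancel
    simp [hA, Nat.factorial_ne_zero] at this
  have h0 := h 0
  simp [hA, phi_zero, Nat.factorial_ne_zero] at h0
  exact ⟨hA, h0⟩

theorem mul_eq_mul_and_sub_eq_two_mul_iff {R : Type*} [CommRing R] [IsDomain R] {c d p q x y : R}
    (hD : c * p - d * q ≠ 0) :
    (x * c = y * d ∧ y * p - x * q = 2 * (c * p - d * q)) ↔ x = 2 * d ∧ y = 2 * c := by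
  refine ⟨fun ⟨h₁, h₂⟩ => ⟨?_, ?_⟩, fun ⟨hx, hy⟩ => by subst hx hy; constructor <;> ring⟩
  · exact mul_right_cancel₀ hD (by linear_combination p * h₁ + d * h₂)
  · exact mul_right_cancel₀ hD (by linear_combination q * h₁ + c * h₂)

theorem fourth_order_C3_iff_general
    (α₂₁ α₃₁ g₂₁ g₃₁ P₂₁ P₂₂ P₃₁ P₃₂ : ℝ)
    (hP₂₁ : P₂₁ ≠ 0) (hP₃₁ : P₃₁ ≠ 0)
    (hD : g₃₁ * P₂₁ * P₃₂ - g₂₁ * P₂₂ * P₃₁ ≠ 0)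
    (b₂ b₃ : ℂ → ℂ)
    (hb₂ : ∀ z, b₂ z = ((2 * g₃₁ * P₃₂ : ℝ) : ℂ) * phi 3 z / ((α₂₁^2 * P₂₁ * (g₃₁ * P₂₁ * P₃₂ - g₂₁ * P₂₂ * P₃₁) : ℝ) : ℂ)
            - ((3 * P₃₁ : ℝ) : ℂ) * phi 4 z / ((α₂₁^2 * P₂₁ * (g₃₁ * P₂₁ * P₃₂ - g₂₁ * P₂₂ * P₃₁) : ℝ) : ℂ))
    (hb₃ : ∀ z, b₃ z = ((2 * g₂₁ * P₂₂ : ℝ) : ℂ) * phi 3 z / ((α₃₁^2 * P₃₁ * (g₂₁ * P₂₂ * P₃₁ - g₃₁ * P₂₁ * P₃₂) : ℝ) : ℂ)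
            - ((3 * P₂₁ : ℝ) : ℂ) * phi 4 z / ((α₃₁^2 * P₃₁ * (g₂₁ * P₂₂ * P₃₁ - g₃₁ * P₂₁ * P₃₂) : ℝ) : ℂ)) :
    (∀ z : ℂ, b₂ z * (α₂₁ : ℂ)^3 * (P₂₁ : ℂ)^3 + b₃ z * (α₃₁ : ℂ)^3 * (P₃₁ : ℂ)^3
        = 6 * phi 4 z)
    ↔ (α₂₁ = 2 * g₂₁ * P₂₂ / P₂₁^2 ∧ α₃₁ = 2 * g₃₁ * P₃₂ / P₃₁^2) := by
  have hD₀ : g₃₁ * P₃₂ * P₂₁ - g₂₁ * P₂₂ * P₃₁ ≠ 0 := by rwa [mul_right_comm g₃₁]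
  set D := g₃₁ * P₂₁ * P₃₂ - g₂₁ * P₂₂ * P₃₁ with hD_def
  have hD' : g₂₁ * P₂₂ * P₃₁ - g₃₁ * P₂₁ * P₃₂ = -D := by ring
  have residual_eq : ∀ z, b₂ z * (α₂₁ : ℂ)^3 * (P₂₁ : ℂ)^3 + b₃ z * (α₃₁ : ℂ)^3 * (P₃₁ : ℂ)^3
      - 6 * phi 4 z
      = ((2 / D * (α₂₁ * P₂₁^2 * (g₃₁ * P₃₂) - α₃₁ * P₃₁^2 * (g₂₁ * P₂₂)) : ℝ) : ℂ) * phi 3 z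
        + ((3 / D * (α₃₁ * P₃₁^2 * P₂₁ - α₂₁ * P₂₁^2 * P₃₁
            - 2 * (g₃₁ * P₃₂ * P₂₁ - g₂₁ * P₂₂ * P₃₁))) : ℝ) * phi 4 z := by
    intro z
    have hDc : (D : ℂ) ≠ 0 := Complex.ofReal_ne_zero.mpr hD
    rw [hb₂, hb₃, hD']
    push_cast
    field_simp
    rw [hD_def]
    push_cast
    ring
  simp_rw [← sub_eq_zero (b := 6 * phi 4 _), residual_eq, phi_linear_combination_eq_zero_iff 3,
    Complex.ofReal_eq_zero]
  simp only [mul_eq_zero, div_eq_zero_iff, two_ne_zero, three_ne_zero, hD, or_false, false_or,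
    sub_eq_zero]
  rw [mul_eq_mul_and_sub_eq_two_mul_iff hD₀, eq_div_iff (pow_ne_zero 2 hP₂₁),
    eq_div_iff (pow_ne_zero 2 hP₃₁), mul_assoc 2 g₂₁, mul_assoc 2 g₃₁]

theorem fourth_order_C3_iff
    (α₂₁ α₃₁ g₂₁ g₃₁ P₂₁ P₂₂ P₃₁ P₃₂ : ℝ)
    (hα₂₁ : α₂₁ ≠ 0) (hα₃₁ : α₃₁ ≠ 0) (hP₂₁ : P₂₁ ≠ 0) (hP₃₁ : P₃₁ ≠ 0)
    (hD : g₃₁ * P₂₁ * P₃₂ - g₂₁ * P₂₂ * P₃₁ ≠ 0)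
    (b₂ b₃ : ℂ → ℂ)
    (hb₂ : ∀ z, b₂ z = ((2 * g₃₁ * P₃₂ : ℝ) : ℂ) * phi 3 z / ((α₂₁^2 * P₂₁ * (g₃₁ * P₂₁ * P₃₂ - g₂₁ * P₂₂ * P₃₁) : ℝ) : ℂ)
            - ((3 * P₃₁ : ℝ) : ℂ) * phi 4 z / ((α₂₁^2 * P₂₁ * (g₃₁ * P₂₁ * P₃₂ - g₂₁ * P₂₂ * P₃₁) : ℝ) : ℂ))
    (hb₃ : ∀ z, b₃ z = ((2 * g₂₁ * P₂₂ : ℝ) : ℂ) * phi 3 z / ((α₃₁^2 * P₃₁ * (g₂₁ * P₂₂ * P₃₁ - g₃₁ * P₂₁ * P₃₂) : ℝ) : ℂ)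
            - ((3 * P₂₁ : ℝ) : ℂ) * phi 4 z / ((α₃₁^2 * P₃₁ * (g₂₁ * P₂₂ * P₃₁ - g₃₁ * P₂₁ * P₃₂) : ℝ) : ℂ)) :
    (∀ z : ℂ, b₂ z * (α₂₁ : ℂ)^3 * (P₂₁ : ℂ)^3 + b₃ z * (α₃₁ : ℂ)^3 * (P₃₁ : ℂ)^3
        = 6 * phi 4 z)
    ↔ (α₂₁ = 2 * g₂₁ * P₂₂ / P₂₁^2 ∧ α₃₁ = 2 * g₃₁ * P₃₂ / P₃₁^2) :=
  fourth_order_C3_iff_general α₂₁ α₃₁ g₂₁ g₃₁ P₂₁ P₂₂ P₃₁ P₃₂ hP₂₁ hP₃₁ hD b₂ b₃ hb₂ hb₃
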